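/- The relative neighborhood graph of any finite set of points in the plane (with pairwise distinct distances) is connected. -/

import Mathlib

/-!
Induct on the length of a pair `u v`: either `uv` is an edge of the relative neighborhood graph,
or some `w` lies in the lune of `u` and `v`, and then both `uw` and `wv` are strictly shorter,
so `u`, `w`, `v` lie in one component.
-/

noncomputable section
open Classical

abbrev Pt := EuclideanSpace ℝ (Fin 2)

/-- The relative neighborhood graph of a finite point set `V`. -/
def rng (V : Finset Pt) : SimpleGraph Pt where
  Adj u v := u ≠ v ∧ u ∈ V ∧ v ∈ V ∧
    ∀ w ∈ V, w ≠ u → w ≠ v → ¬ (dist u w < dist u v ∧ dist v w < dist u v)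
  symm := by
    refine ⟨?_⟩
    rintro u v ⟨h1, h2, h3, h4⟩
    refine ⟨h1.symm, h3, h2, fun w hw hwv hwu h => ?_⟩
    rw [dist_comm v u] at h
    exact h4 w hw hwu hwv ⟨h.2, h.1⟩
  loopless := ⟨fun u h => h.1 rfl⟩

/-- General position: all pairwise distances between points of `V` are distinct. -/
def GenPos (V : Finset Pt) : Prop :=
  ∀ u v x y : Pt, u ∈ V → v ∈ V → x ∈ V → y ∈ V → u ≠ v → x ≠ y →
    s(u, v) ≠ s(x, y) → dist u v ≠ dist x y

theorem induce_preconnected_of_adj_or_exists_closer {α : Type*} [PseudoMetricSpace α]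
    (G : SimpleGraph α) (V : Finset α)
    (h : ∀ u ∈ V, ∀ v ∈ V, u ≠ v →
      G.Adj u v ∨ ∃ w ∈ V, dist u w < dist u v ∧ dist w v < dist u v) :
    (G.induce (V : Set α)).Preconnected := by
  have hwf : WellFounded (InvImage (· < ·) fun p : V × V => dist (p.1 : α) p.2) :=
    Finite.wellFounded_of_trans_of_irrefl _
  suffices ∀ p : V × V, (G.induce (V : Set α)).Reachable p.1 p.2 from fun u v => this (u, v)
  refine hwf.fix fun ⟨u, v⟩ ih => ?_
  by_cases huv : u = v
  · exact huv ▸ .refl u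
  rcases h u u.2 v v.2 (Subtype.coe_ne_coe.mpr huv) with hadj | ⟨w, hw, huw, hwv⟩
  · exact SimpleGraph.induce_adj.mpr hadj |>.reachable
  · exact (ih (u, ⟨w, hw⟩) huw).trans (ih (⟨w, hw⟩, v) hwv)

theorem rng_adj_or_exists_closer (V : Finset Pt) {u v : Pt} (hu : u ∈ V) (hv : v ∈ V)
    (huv : u ≠ v) :
    (rng V).Adj u v ∨ ∃ w ∈ V, dist u w < dist u v ∧ dist w v < dist u v := by
  by_contra! hno
  refine hno.1 ⟨huv, hu, hv, fun w hw _ _ ⟨huw, hvw⟩ => ?_⟩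
  exact hno.2 w hw huw |>.not_gt (dist_comm v w ▸ hvw)

theorem stmt_5_general (V : Finset Pt) (hne : V.Nonempty) :
    ((rng V).induce (V : Set Pt)).Connected := by
  have : Nonempty (V : Set Pt) := hne.to_set.coe_sort
  exact .mk <| induce_preconnected_of_adj_or_exists_closer (rng V) V fun u hu v hv huv =>
    rng_adj_or_exists_closer V hu hv huv

/-- The relative neighborhood graph of a nonempty finite point set with
pairwise distinct distances is connected. -/
theorem stmt_5 (V : Finset Pt) (hgp : GenPos V) (hne : V.Nonempty) :
    ((rng V).induce (V : Set Pt)).Connected :=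
  stmt_5_general V hne
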